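/- arXiv:2506.17197 — 3 statements merged into one kernel-verified Lean document; each statement's English description precedes it below -/
import Mathlib

section
/- Let I be a finite set and S ⊆ I nonempty, let E_i be standard Borel spaces, let Q be a σ-finite measure on ∏_{i∈I} E_i, and for each i ∈ S let μ_i be a probability measure on E_i. Suppose Π⁰ is a probability measure on ∏_{i∈I} E_i with Π⁰ ≪ Q such that dΠ⁰/dQ(x) = ∏_{i∈S} f_i(x_i) Q-a.e. for measurable functions f_i : E_i → (0,∞) with log f_i ∈ L¹(μ_i), and such that the marginal of Π⁰ at each i ∈ S equals μ_i. Then KL(Π⁰ ‖ Q) = ∑_{i∈S} ∫ log f_i dμ_i, and every probability measure Π on ∏_{i∈I} E_i with Π ≪ Q, with marginal at each i ∈ S equal to μ_i, and with KL(Π ‖ Q) finite, satisfies KL(Π ‖ Q) ≥ KL(Π⁰ ‖ Q), with equality if and only if Π = Π⁰. -/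
/-! Since `dP₀/dQ = ∏_{i ∈ S} f_i(x_i)`, the log-likelihood ratio `log (dP₀/dQ)` is a sum of
functions of single coordinates in `S`, so it has the same integral `∑_{i ∈ S} ∫ log f_i dμ_i`
under every measure with marginals `μ_i` on `S`. The density is positive, so `P ≪ Q` gives
`P ≪ P₀`, and the chain rule `log (dP/dQ) = log (dP/dP₀) + log (dP₀/dQ)` then yields the
Pythagorean identity `KL(P‖Q) = KL(P‖P₀) + KL(P₀‖Q)`. Gibbs' inequality `KL(P‖P₀) ≥ 0`, with
equality only for `P = P₀`, concludes. -/

open MeasureTheory ProbabilityTheory Classical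

open scoped ENNReal

/-- Kullback-Leibler divergence of a probability measure `μ` with respect to a σ-finite
measure `ν`, valued in `(-∞, +∞]`: `KL(μ‖ν) = ∫ log(dμ/dν) dμ` when `μ ≪ ν` and the
log-likelihood ratio is `μ`-integrable, and `+∞` otherwise. -/
noncomputable def KL {α : Type*} [MeasurableSpace α] (μ ν : Measure α) : EReal :=
  if μ ≪ ν ∧ Integrable (llr μ ν) μ then ((∫ x, llr μ ν x ∂μ : ℝ) : EReal) else ⊤

open InformationTheory Real

section Divergence

variable {α : Type*} [MeasurableSpace α]

lemma kl_eq_integral_llr {μ ν : Measure α} (hμν : μ ≪ ν) (h_int : Integrable (llr μ ν) μ) :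
    KL μ ν = ((∫ x, llr μ ν x ∂μ : ℝ) : EReal) :=
  if_pos ⟨hμν, h_int⟩

lemma kl_eq_top_of_not_integrable {μ ν : Measure α} (h_int : ¬ Integrable (llr μ ν) μ) :
    KL μ ν = ⊤ :=
  if_neg fun h => h_int h.2

lemma kl_eq_klDiv (μ ν : Measure α) [IsProbabilityMeasure μ] [IsProbabilityMeasure ν] :
    KL μ ν = klDiv μ ν := by
  by_cases h : μ ≪ ν ∧ Integrable (llr μ ν) μ
  · rw [kl_eq_integral_llr h.1 h.2, klDiv_of_ac_of_integrable h.1 h.2, EReal.coe_ennreal_ofReal,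
      max_eq_left]
    · simp
    · simpa using integral_llr_add_sub_measure_univ_nonneg h.1 h.2
  · rw [KL, if_neg h, klDiv_eq_top_iff.mpr fun hμν h_int => h ⟨hμν, h_int⟩, EReal.coe_ennreal_top]

lemma llr_add_llr_ae_eq {P P₀ Q : Measure α} [SigmaFinite P] [SigmaFinite P₀] [SigmaFinite Q]
    (hPP₀ : P ≪ P₀) (hP₀Q : P₀ ≪ Q) :
    (fun x => llr P P₀ x + llr P₀ Q x) =ᵐ[P] llr P Q := by
  have hPQ := hPP₀.trans hP₀Q
  filter_upwards [hPQ.ae_le (Measure.rnDeriv_mul_rnDeriv hPP₀), Measure.rnDeriv_pos hPP₀,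
    hPP₀.ae_le (Measure.rnDeriv_lt_top P P₀), hPP₀.ae_le (Measure.rnDeriv_pos hP₀Q),
    hPQ.ae_le (Measure.rnDeriv_lt_top P₀ Q)] with x hmul hpos hlt hpos₀ hlt₀
  rw [llr, llr, llr, ← hmul, Pi.mul_apply, ENNReal.toReal_mul, Real.log_mul
    (ENNReal.toReal_pos hpos.ne' hlt.ne).ne' (ENNReal.toReal_pos hpos₀.ne' hlt₀.ne).ne']

theorem kl_eq_kl_add_kl {P P₀ Q : Measure α} [SigmaFinite P] [SigmaFinite P₀] [SigmaFinite Q]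
    (hPP₀ : P ≪ P₀) (hP₀Q : P₀ ≪ Q) (h_int : Integrable (llr P₀ Q) P)
    (h_int₀ : Integrable (llr P₀ Q) P₀) (h_eq : ∫ x, llr P₀ Q x ∂P = ∫ x, llr P₀ Q x ∂P₀) :
    KL P Q = KL P P₀ + KL P₀ Q := by
  have h_chain := llr_add_llr_ae_eq hPP₀ hP₀Q
  rw [kl_eq_integral_llr hP₀Q h_int₀]
  by_cases h_int_PP₀ : Integrable (llr P P₀) P
  · rw [kl_eq_integral_llr hPP₀ h_int_PP₀,
      kl_eq_integral_llr (hPP₀.trans hP₀Q) ((h_int_PP₀.add h_int).congr h_chain),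
      ← integral_congr_ae h_chain, integral_add h_int_PP₀ h_int, h_eq, EReal.coe_add]
  · have h_int_PQ : ¬ Integrable (llr P Q) P := fun h =>
      h_int_PP₀ ((h.sub h_int).congr (h_chain.mono fun x hx => by simp [← hx]))
    rw [kl_eq_top_of_not_integrable h_int_PQ, kl_eq_top_of_not_integrable h_int_PP₀,
      EReal.top_add_coe]

lemma absolutelyContinuous_of_ae_rnDeriv_ne_zero {μ ν : Measure α}
    [μ.HaveLebesgueDecomposition ν] (hμν : μ ≪ ν) (h : ∀ᵐ x ∂ν, μ.rnDeriv ν x ≠ 0) : ν ≪ μ := by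
  have := withDensity_absolutelyContinuous' (μ.measurable_rnDeriv ν).aemeasurable h
  rwa [Measure.withDensity_rnDeriv_eq _ _ hμν] at this

lemma llr_ae_eq_sum_log {ι : Type*} {μ ν : Measure α} {S : Finset ι} {F : ι → α → ℝ}
    (hF : ∀ i ∈ S, ∀ x, 0 < F i x)
    (h : μ.rnDeriv ν =ᵐ[ν] fun x => ENNReal.ofReal (∏ i ∈ S, F i x)) :
    llr μ ν =ᵐ[ν] fun x => ∑ i ∈ S, log (F i x) := by
  filter_upwards [h] with x hx
  rw [llr, hx, ENNReal.toReal_ofReal (Finset.prod_nonneg fun i hi => (hF i hi x).le),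
    Real.log_prod fun i hi => (hF i hi x).ne']

end Divergence

lemma EReal.add_coe_eq_coe_iff {x : EReal} {c : ℝ} : x + c = c ↔ x = 0 := by
  refine ⟨fun h => ?_, fun h => by rw [h, zero_add]⟩
  rw [← EReal.add_sub_cancel_right (a := x) (b := c), h, ← EReal.coe_sub, _root_.sub_self,
    EReal.coe_zero]

section Marginals

variable {ι : Type*} {E : ι → Type*} [∀ i, MeasurableSpace (E i)] {P : Measure (∀ i, E i)}
  {μ : ∀ i, Measure (E i)}

lemma integrable_comp_eval {i : ι} {φ : E i → ℝ} (hP : P.map (fun x => x i) = μ i)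
    (hφ : Integrable φ (μ i)) : Integrable (fun x => φ (x i)) P :=
  (hP ▸ hφ).comp_aemeasurable (measurable_pi_apply i).aemeasurable

variable {S : Finset ι} {φ : ∀ i, E i → ℝ}

lemma integrable_sum_comp_eval (hP : ∀ i ∈ S, P.map (fun x => x i) = μ i)
    (hφ : ∀ i ∈ S, Integrable (φ i) (μ i)) : Integrable (fun x => ∑ i ∈ S, φ i (x i)) P :=
  integrable_finsetSum S fun i hi => integrable_comp_eval (hP i hi) (hφ i hi)

lemma integral_sum_comp_eval (hP : ∀ i ∈ S, P.map (fun x => x i) = μ i)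
    (hφ : ∀ i ∈ S, Integrable (φ i) (μ i)) :
    ∫ x, ∑ i ∈ S, φ i (x i) ∂P = ∑ i ∈ S, ∫ y, φ i y ∂(μ i) := by
  rw [integral_finsetSum S fun i hi => integrable_comp_eval (hP i hi) (hφ i hi)]
  refine Finset.sum_congr rfl fun i hi => ?_
  rw [← hP i hi, integral_map (measurable_pi_apply i).aemeasurable
    ((hP i hi).symm ▸ (hφ i hi).aestronglyMeasurable)]

end Marginals

theorem kl_min_of_product_density_general
    {I : Type*} {E : I → Type*}
    [∀ i, MeasurableSpace (E i)]
    (S : Finset I)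
    (Q : Measure (∀ i, E i)) [SigmaFinite Q]
    (μ : ∀ i, Measure (E i))
    (P₀ : Measure (∀ i, E i)) [IsProbabilityMeasure P₀]
    (hac : P₀ ≪ Q)
    (f : ∀ i, E i → ℝ)
    (hf_pos : ∀ i ∈ S, ∀ y, 0 < f i y)
    (hf_log_int : ∀ i ∈ S, Integrable (fun y => Real.log (f i y)) (μ i))
    (hdens : P₀.rnDeriv Q =ᵐ[Q] fun x => ENNReal.ofReal (∏ i ∈ S, f i (x i)))
    (hmarg : ∀ i ∈ S, P₀.map (fun x => x i) = μ i) :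
    KL P₀ Q = ((∑ i ∈ S, ∫ y, Real.log (f i y) ∂(μ i) : ℝ) : EReal) ∧
      ∀ P : Measure (∀ i, E i), IsProbabilityMeasure P → P ≪ Q →
        (∀ i ∈ S, P.map (fun x => x i) = μ i) → KL P Q ≠ ⊤ →
          KL P₀ Q ≤ KL P Q ∧ (KL P Q = KL P₀ Q ↔ P = P₀) := by
  set c := ∑ i ∈ S, ∫ y, log (f i y) ∂(μ i)
  have hllr := llr_ae_eq_sum_log (fun i hi x => hf_pos i hi (x i)) hdens
  have hllr_of_marginals : ∀ P : Measure (∀ i, E i), P ≪ Q →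
      (∀ i ∈ S, P.map (fun x => x i) = μ i) → Integrable (llr P₀ Q) P ∧ ∫ x, llr P₀ Q x ∂P = c :=
    fun P hPQ hP => ⟨(integrable_sum_comp_eval hP hf_log_int).congr (hPQ.ae_eq hllr.symm), by
      rw [integral_congr_ae (hPQ.ae_eq hllr), integral_sum_comp_eval hP hf_log_int]⟩
  obtain ⟨hint₀, hval₀⟩ := hllr_of_marginals P₀ hac hmarg
  have hKL₀ : KL P₀ Q = c := by rw [kl_eq_integral_llr hac hint₀, hval₀]
  have hQP₀ : Q ≪ P₀ := absolutelyContinuous_of_ae_rnDeriv_ne_zero hac <| hdens.mono fun x hx => by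
    rw [hx]
    exact (ENNReal.ofReal_pos.mpr (Finset.prod_pos fun i hi => hf_pos i hi (x i))).ne'
  refine ⟨hKL₀, fun P _ hPQ hP _ => ?_⟩
  obtain ⟨hint, hval⟩ := hllr_of_marginals P hPQ hP
  rw [kl_eq_kl_add_kl (hPQ.trans hQP₀) hac hint hint₀ (hval.trans hval₀.symm), kl_eq_klDiv P P₀,
    hKL₀, EReal.add_coe_eq_coe_iff, EReal.coe_ennreal_eq_zero, klDiv_eq_zero_iff]
  exact ⟨le_add_of_nonneg_left (EReal.coe_ennreal_nonneg _), Iff.rfl⟩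

/-- A coupling `P⁰` with prescribed marginals `μ i` on `S` whose density with respect to the
reference measure `Q` factorises as a product of positive single-coordinate potentials
`∏_{i ∈ S} f i (x i)` satisfies `KL(P⁰ ‖ Q) = ∑_{i ∈ S} ∫ log f_i dμ_i`, and is the unique
minimiser of `KL(· ‖ Q)` among couplings with the same marginals on `S`, absolutely continuous
with respect to `Q` and with finite KL divergence. -/
theorem kl_min_of_product_density
    {I : Type*} [Fintype I] {E : I → Type*}
    [∀ i, MeasurableSpace (E i)] [∀ i, StandardBorelSpace (E i)]
    (S : Finset I) (hS : S.Nonempty)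
    (Q : Measure (∀ i, E i)) [SigmaFinite Q]
    (μ : ∀ i, Measure (E i)) [∀ i, IsProbabilityMeasure (μ i)]
    (P₀ : Measure (∀ i, E i)) [IsProbabilityMeasure P₀]
    (hac : P₀ ≪ Q)
    (f : ∀ i, E i → ℝ)
    (hf_meas : ∀ i ∈ S, Measurable (f i))
    (hf_pos : ∀ i ∈ S, ∀ y, 0 < f i y)
    (hf_log_int : ∀ i ∈ S, Integrable (fun y => Real.log (f i y)) (μ i))
    (hdens : P₀.rnDeriv Q =ᵐ[Q] fun x => ENNReal.ofReal (∏ i ∈ S, f i (x i)))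
    (hmarg : ∀ i ∈ S, P₀.map (fun x => x i) = μ i) :
    KL P₀ Q = ((∑ i ∈ S, ∫ y, Real.log (f i y) ∂(μ i) : ℝ) : EReal) ∧
      ∀ P : Measure (∀ i, E i), IsProbabilityMeasure P → P ≪ Q →
        (∀ i ∈ S, P.map (fun x => x i) = μ i) → KL P Q ≠ ⊤ →
          KL P₀ Q ≤ KL P Q ∧ (KL P Q = KL P₀ Q ↔ P = P₀) :=
  kl_min_of_product_density_general S Q μ P₀ hac f hf_pos hf_log_int hdens hmarg
end

section
/- Let V be a finite set, S ⊆ V nonempty, and let Q be a σ-finite measure on (ℝ^d)^V which is mutually absolutely continuous with Lebesgue measure. For each i ∈ S let μ_i be a probability measure on ℝ^d. Suppose Π is a probability measure on (ℝ^d)^V with Π ≪ Q, KL(Π ‖ Q) finite, marginal at each i ∈ S equal to μ_i, and such that its density factorises in both of the following ways Q-a.e.: dΠ/dQ(x) = ∏_{v∈V} g_v(x_v) for measurable functions g_v : ℝ^d → [0,∞) with log g_i ∈ L¹(μ_i) for each i ∈ S, and dΠ/dQ(x) = h((x_i)_{i∈S}) for a measurable function h : (ℝ^d)^S → [0,∞).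 Then Π is the unique minimiser of KL(· ‖ Q) over probability measures Π' on (ℝ^d)^V with Π' ≪ Q, KL(Π' ‖ Q) finite, and marginal at each i ∈ S equal to μ_i; that is, every such Π' satisfies KL(Π' ‖ Q) ≥ KL(Π ‖ Q), with equality only if Π' = Π. -/
open MeasureTheory ProbabilityTheory Classical

open scoped ENNReal

/-!
Split the density as `∏ᵥ gᵥ(xᵥ) = G(x_S) F(x_{Sᶜ})`. It also equals `h(x_S)`, and `Q` has the same
null sets as Lebesgue measure, which is a product over `x = (x_S, x_{Sᶜ})`; so by Fubini `F` is
a.e. a constant `c`, positive since `P ≠ 0`. Hence `log dP/dQ = log c + ∑_{i ∈ S} log gᵢ(xᵢ)` under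
every competitor `P' ≪ Q`, and its `P'`-integral only sees the marginals on `S`, so it equals its
`P`-integral. The density is positive `P'`-a.e. (the `gᵢ` are positive `μᵢ`-a.e.), so `P' ≪ P`,
and the chain rule gives `KL(P'‖Q) = KL(P'‖P) + KL(P‖Q)`; Gibbs' inequality concludes.
-/

section LogLikelihoodRatio

variable {Ω : Type*} [MeasurableSpace Ω] {μ ν ξ : Measure Ω}

theorem KL_of_ac_of_integrable (hμν : μ ≪ ν) (hint : Integrable (llr μ ν) μ) :
    KL μ ν = ((∫ x, llr μ ν x ∂μ : ℝ) : EReal) :=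
  if_pos ⟨hμν, hint⟩

theorem integrable_llr_of_KL_ne_top (h : KL μ ν ≠ ⊤) : Integrable (llr μ ν) μ := by
  by_contra hint
  exact h (if_neg fun hac => hint hac.2)

theorem llr_ae_eq_llr_add_llr [SigmaFinite ξ] [SigmaFinite μ] [SigmaFinite ν] (hξμ : ξ ≪ μ)
    (hμν : μ ≪ ν) : llr ξ ν =ᵐ[ξ] fun x => llr ξ μ x + llr μ ν x := by
  filter_upwards [(hξμ.trans hμν).ae_le (Measure.rnDeriv_mul_rnDeriv hξμ),
    Measure.rnDeriv_pos hξμ, hξμ.ae_le (Measure.rnDeriv_pos hμν),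
    hξμ.ae_le (Measure.rnDeriv_lt_top ξ μ), (hξμ.trans hμν).ae_le (Measure.rnDeriv_lt_top μ ν)]
    with x hchain hξμ_pos hμν_pos hξμ_lt hμν_lt
  simp only [llr_def]
  rw [← hchain, Pi.mul_apply, ENNReal.toReal_mul,
    Real.log_mul (ENNReal.toReal_pos hξμ_pos.ne' hξμ_lt.ne).ne'
      (ENNReal.toReal_pos hμν_pos.ne' hμν_lt.ne).ne']

theorem ae_pos_of_rnDeriv_ae_eq_ofReal [μ.HaveLebesgueDecomposition ν] (hμν : μ ≪ ν)
    {f : Ω → ℝ} (hf : μ.rnDeriv ν =ᵐ[ν] fun x => ENNReal.ofReal (f x)) : ∀ᵐ x ∂μ, 0 < f x := by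
  filter_upwards [Measure.rnDeriv_pos hμν, hμν.ae_le hf] with x hx hfx
  exact ENNReal.ofReal_pos.mp (hfx ▸ hx)

theorem absolutelyContinuous_of_ae_rnDeriv_pos [μ.HaveLebesgueDecomposition ν] [SFinite ν]
    (hμν : μ ≪ ν) (hξν : ξ ≪ ν) (hpos : ∀ᵐ x ∂ξ, 0 < μ.rnDeriv ν x) : ξ ≪ μ := by
  refine Measure.AbsolutelyContinuous.mk fun s hs hμs => ?_
  have hzero : ∀ᵐ x ∂ν, x ∈ s → μ.rnDeriv ν x = 0 := by
    rw [← Measure.setLIntegral_rnDeriv hμν, lintegral_eq_zero_iff (Measure.measurable_rnDeriv μ ν)]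
      at hμs
    exact (ae_restrict_iff' hs).mp hμs
  rw [← compl_mem_ae_iff]
  filter_upwards [hξν.ae_le hzero, hpos] with x hx hx_pos hxs
  exact hx_pos.ne' (hx hxs)

theorem integral_llr_nonneg [IsProbabilityMeasure μ] [IsProbabilityMeasure ν] (hμν : μ ≪ ν)
    (hint : Integrable (llr μ ν) μ) : 0 ≤ ∫ x, llr μ ν x ∂μ := by
  simpa using InformationTheory.integral_llr_add_sub_measure_univ_nonneg hμν hint

theorem eq_of_integral_llr_eq_zero [IsProbabilityMeasure μ] [IsProbabilityMeasure ν]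
    (hμν : μ ≪ ν) (hint : Integrable (llr μ ν) μ) (h : ∫ x, llr μ ν x ∂μ = 0) : μ = ν := by
  rw [← InformationTheory.klDiv_eq_zero_iff,
    InformationTheory.klDiv_of_ac_of_integrable hμν hint]
  simp [h]

theorem KL_le_and_eq_of_integral_llr_eq [IsProbabilityMeasure μ] [IsProbabilityMeasure ξ]
    [SigmaFinite ν] (hξμ : ξ ≪ μ) (hμν : μ ≪ ν) (hξ : KL ξ ν ≠ ⊤)
    (hμ_int : Integrable (llr μ ν) μ) (hξ_int : Integrable (llr μ ν) ξ)
    (heq : ∫ x, llr μ ν x ∂ξ = ∫ x, llr μ ν x ∂μ) :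
    KL μ ν ≤ KL ξ ν ∧ (KL ξ ν = KL μ ν → ξ = μ) := by
  have hint := integrable_llr_of_KL_ne_top hξ
  have hchain := llr_ae_eq_llr_add_llr hξμ hμν
  have hξμ_int : Integrable (llr ξ μ) ξ :=
    (hint.sub hξ_int).congr (hchain.mono fun x hx => by simp [hx])
  have hsplit : ∫ x, llr ξ ν x ∂ξ = ∫ x, llr ξ μ x ∂ξ + ∫ x, llr μ ν x ∂μ := by
    rw [integral_congr_ae hchain, integral_add hξμ_int hξ_int, heq]
  rw [KL_of_ac_of_integrable (hξμ.trans hμν) hint, KL_of_ac_of_integrable hμν hμ_int,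
    EReal.coe_le_coe_iff, EReal.coe_eq_coe_iff]
  refine ⟨by linarith [integral_llr_nonneg hξμ hξμ_int], fun h => ?_⟩
  exact eq_of_integral_llr_eq_zero hξμ hξμ_int (by linarith)

end LogLikelihoodRatio

section ProductFactorisation

variable {α β : Type*} [MeasurableSpace α] [MeasurableSpace β]

theorem exists_ae_eq_const_of_mul_ae_eq_prod {μ : Measure α} {ν : Measure β} [SFinite ν]
    {G h : α → ℝ} {F : β → ℝ} (hGF : ∀ᵐ p ∂μ.prod ν, G p.1 * F p.2 = h p.1)
    (hG : ¬ ∀ᵐ y ∂μ, G y = 0) :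
    ∃ c, ∀ᵐ z ∂ν, F z = c := by
  obtain ⟨y, hy, hGy⟩ :=
    ((Measure.ae_ae_of_ae_prod hGF).and_frequently (Filter.not_eventually.mp hG)).exists
  exact ⟨h y / G y, hy.mono fun z hz => by rw [eq_div_iff hGy, mul_comm, hz]⟩

variable {ι E : Type*} [Fintype ι] [MeasurableSpace E] {ρ : ι → Measure E}
  [∀ i, SigmaFinite (ρ i)]

theorem exists_ae_eq_const_of_mul_ae_eq_pi (p : ι → Prop) [DecidablePred p]
    {G h : ({i // p i} → E) → ℝ} {F : ({i // ¬ p i} → E) → ℝ}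
    (hGF : ∀ᵐ x ∂Measure.pi ρ, G (fun i => x i) * F (fun j => x j) = h (fun i => x i))
    (hG : ¬ ∀ᵐ x ∂Measure.pi ρ, G (fun i => x i) = 0) :
    ∃ c, ∀ᵐ x ∂Measure.pi ρ, F (fun j => x j) = c := by
  let e := MeasurableEquiv.piEquivPiSubtypeProd (fun _ : ι => E) p
  have hae : ∀ q : ((i : {i // p i}) → E) × ((j : {j // ¬ p j}) → E) → Prop,
      (∀ᵐ x ∂Measure.pi ρ, q (e x)) ↔
        ∀ᵐ z ∂(Measure.pi fun i : {i // p i} => ρ i).prod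
          (Measure.pi fun j : {j // ¬ p j} => ρ j), q z := by
    intro q
    rw [← (measurePreserving_piEquivPiSubtypeProd ρ p).map_eq,
      e.measurableEmbedding.ae_map_iff]
  obtain ⟨c, hc⟩ := exists_ae_eq_const_of_mul_ae_eq_prod ((hae _).mp hGF)
    fun hG0 => hG ((hae fun z => G z.1 = 0).mpr (Measure.quasiMeasurePreserving_fst.ae hG0))
  exact ⟨c, (hae fun z => F z.2 = c).mpr (Measure.quasiMeasurePreserving_snd.ae hc)⟩

theorem exists_prod_ae_eq_const_mul_prod {Q : Measure (ι → E)} (hQ : Q ≪ Measure.pi ρ)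
    (hQ' : Measure.pi ρ ≪ Q) (S : Finset ι) {g : ι → E → ℝ} {h : ({i // i ∈ S} → E) → ℝ}
    (hgh : ∀ᵐ x ∂Q, ∏ i, g i (x i) = h (fun i => x i))
    (hne : ¬ ∀ᵐ x ∂Q, ∏ i, g i (x i) = 0) :
    ∃ c, ∀ᵐ x ∂Q, ∏ i, g i (x i) = c * ∏ i ∈ S, g i (x i) := by
  have hae : ae Q = ae (Measure.pi ρ) := le_antisymm hQ.ae_le hQ'.ae_le
  have split : ∀ x : ι → E, ∏ i, g i (x i) =
      (∏ i : {i // i ∈ S}, g i (x i)) * ∏ j : {j // j ∉ S}, g j (x j) := fun x => by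
    convert (Fintype.prod_subtype_mul_prod_subtype (· ∈ S) fun i => g i (x i)).symm
  simp only [hae, split] at hgh hne ⊢
  obtain ⟨c, hc⟩ := exists_ae_eq_const_of_mul_ae_eq_pi (· ∈ S)
    (G := fun y => ∏ i : {i // i ∈ S}, g i (y i))
    (F := fun z => ∏ j : {j // j ∉ S}, g j (z j)) hgh
    fun hG0 => hne (hG0.mono fun x hx => by rw [hx, zero_mul])
  exact ⟨c, hc.mono fun x hx => by rw [hx, mul_comm, Finset.prod_coe_sort S fun i => g i (x i)]⟩

theorem exists_rnDeriv_ae_eq_const_mul_prod {Q P : Measure (ι → E)} [NeZero P]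
    [P.HaveLebesgueDecomposition Q] (hQ : Q ≪ Measure.pi ρ) (hQ' : Measure.pi ρ ≪ Q)
    (hPQ : P ≪ Q) {S : Finset ι} {g : ι → E → ℝ} {h : ({i // i ∈ S} → E) → ℝ}
    (hg : ∀ i y, 0 ≤ g i y) (hh : ∀ z, 0 ≤ h z)
    (hmarkov : P.rnDeriv Q =ᵐ[Q] fun x => ENNReal.ofReal (∏ i, g i (x i)))
    (hreciprocal : P.rnDeriv Q =ᵐ[Q] fun x => ENNReal.ofReal (h (fun i => x i))) :
    ∃ c, 0 < c ∧ P.rnDeriv Q =ᵐ[Q] fun x => ENNReal.ofReal (c * ∏ i ∈ S, g i (x i)) := by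
  have hprod_nonneg : ∀ (T : Finset ι) (x : ι → E), 0 ≤ ∏ i ∈ T, g i (x i) := fun T x =>
    Finset.prod_nonneg fun i _ => hg i (x i)
  have hpos := ae_pos_of_rnDeriv_ae_eq_ofReal hPQ hmarkov
  have hgh : ∀ᵐ x ∂Q, ∏ i, g i (x i) = h (fun i => x i) := by
    filter_upwards [hmarkov, hreciprocal] with x hx hx'
    exact (ENNReal.ofReal_eq_ofReal_iff (hprod_nonneg _ x) (hh _)).mp (hx ▸ hx')
  obtain ⟨c, hc⟩ := exists_prod_ae_eq_const_mul_prod hQ hQ' S hgh fun h0 => by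
    obtain ⟨x, hx, hx0⟩ := (hpos.and (hPQ.ae_le h0)).exists
    exact hx.ne' hx0
  obtain ⟨x, hx, hxc⟩ := (hpos.and (hPQ.ae_le hc)).exists
  exact ⟨c, pos_of_mul_pos_left (hxc ▸ hx) (hprod_nonneg S x),
    hmarkov.trans (hc.mono fun x hx => congrArg ENNReal.ofReal hx)⟩

end ProductFactorisation

section CoordinatePotentials

open Real

variable {ι E : Type*} [MeasurableSpace E] {ν : Measure (ι → E)} {μ : ι → Measure E}
  {S : Finset ι}

theorem ae_forall_pos_of_map_eq {g : ι → E → ℝ} (hg : ∀ i ∈ S, ∀ᵐ y ∂μ i, 0 < g i y)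
    (hν : ∀ i ∈ S, ν.map (fun x => x i) = μ i) : ∀ᵐ x ∂ν, ∀ i ∈ S, 0 < g i (x i) :=
  (Filter.eventually_all_finset S).mpr fun i hi =>
    ae_of_ae_map (measurable_pi_apply i).aemeasurable (hν i hi ▸ hg i hi)

theorem integrable_sum_comp_eval_of_map_eq {f : ι → E → ℝ}
    (hf : ∀ i ∈ S, Integrable (f i) (μ i)) (hν : ∀ i ∈ S, ν.map (fun x => x i) = μ i) :
    Integrable (fun x => ∑ i ∈ S, f i (x i)) ν :=
  integrable_finsetSum S fun i hi =>
    (hν i hi ▸ hf i hi).comp_measurable (measurable_pi_apply i)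

theorem integral_sum_comp_eval_of_map_eq {f : ι → E → ℝ}
    (hf : ∀ i ∈ S, Integrable (f i) (μ i)) (hν : ∀ i ∈ S, ν.map (fun x => x i) = μ i) :
    ∫ x, ∑ i ∈ S, f i (x i) ∂ν = ∑ i ∈ S, ∫ y, f i y ∂μ i := by
  rw [integral_finsetSum S fun i hi =>
    (hν i hi ▸ hf i hi).comp_measurable (measurable_pi_apply i)]
  refine Finset.sum_congr rfl fun i hi => ?_
  rw [← hν i hi, integral_map (measurable_pi_apply i).aemeasurable]
  exact (hν i hi ▸ hf i hi).aestronglyMeasurable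

theorem ae_map_eval_pos_of_ae_prod_pos [Fintype ι] {P : Measure (ι → E)} {g : ι → E → ℝ}
    (hg : ∀ i y, 0 ≤ g i y) (hpos : ∀ᵐ x ∂P, 0 < ∏ i, g i (x i)) (i : ι)
    (hgi : Measurable (g i)) : ∀ᵐ y ∂P.map (fun x => x i), 0 < g i y := by
  have hs : MeasurableSet {y | 0 < g i y} := hgi measurableSet_Ioi
  refine (ae_map_iff (measurable_pi_apply i).aemeasurable hs).mpr (hpos.mono fun x hx => ?_)
  exact (hg i (x i)).lt_of_ne' (Finset.prod_ne_zero_iff.mp hx.ne' i (Finset.mem_univ i))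

variable {P Q : Measure (ι → E)} {g : ι → E → ℝ} {c : ℝ}

theorem llr_ae_eq_log_add_sum_log (hνQ : ν ≪ Q)
    (hdens : P.rnDeriv Q =ᵐ[Q] fun x => ENNReal.ofReal (c * ∏ i ∈ S, g i (x i))) (hc : 0 < c)
    (hg : ∀ᵐ x ∂ν, ∀ i ∈ S, 0 < g i (x i)) :
    llr P Q =ᵐ[ν] fun x => log c + ∑ i ∈ S, log (g i (x i)) := by
  filter_upwards [hνQ.ae_le hdens, hg] with x hx hgx
  have hprod : 0 < ∏ i ∈ S, g i (x i) := Finset.prod_pos hgx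
  rw [llr, hx, ENNReal.toReal_ofReal (mul_pos hc hprod).le, log_mul hc.ne' hprod.ne',
    log_prod fun i hi => (hgx i hi).ne']

theorem integrable_llr_and_integral_llr_eq_of_map_eq [IsProbabilityMeasure ν] (hνQ : ν ≪ Q)
    (hdens : P.rnDeriv Q =ᵐ[Q] fun x => ENNReal.ofReal (c * ∏ i ∈ S, g i (x i))) (hc : 0 < c)
    (hg_pos : ∀ i ∈ S, ∀ᵐ y ∂μ i, 0 < g i y)
    (hg_log : ∀ i ∈ S, Integrable (fun y => log (g i y)) (μ i))
    (hν : ∀ i ∈ S, ν.map (fun x => x i) = μ i) :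
    Integrable (llr P Q) ν ∧
      ∫ x, llr P Q x ∂ν = log c + ∑ i ∈ S, ∫ y, log (g i y) ∂μ i := by
  have hllr := llr_ae_eq_log_add_sum_log hνQ hdens hc (ae_forall_pos_of_map_eq hg_pos hν)
  have hint := integrable_sum_comp_eval_of_map_eq hg_log hν
  refine ⟨((integrable_const _).add hint).congr hllr.symm, ?_⟩
  rw [integral_congr_ae hllr, integral_add (integrable_const _) hint, integral_const,
    integral_sum_comp_eval_of_map_eq hg_log hν, probReal_univ, one_smul]

end CoordinatePotentials

theorem static_treeSB_characterisation_general
    {V : Type*} [Fintype V] (d : ℕ) (S : Finset V)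
    (Q : Measure (V → Fin d → ℝ)) [SigmaFinite Q]
    (hQ_ac : Q ≪ volume) (hQ_ac' : (volume : Measure (V → Fin d → ℝ)) ≪ Q)
    (μ : V → Measure (Fin d → ℝ))
    (P : Measure (V → Fin d → ℝ)) [IsProbabilityMeasure P]
    (hac : P ≪ Q)
    (hmarg : ∀ i ∈ S, P.map (fun x => x i) = μ i)
    (g : V → (Fin d → ℝ) → ℝ)
    (hg_meas : ∀ v, Measurable (g v))
    (hg_nonneg : ∀ v y, 0 ≤ g v y)
    (hg_log_int : ∀ i ∈ S, Integrable (fun y => Real.log (g i y)) (μ i))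
    (hdens_markov : P.rnDeriv Q =ᵐ[Q] fun x => ENNReal.ofReal (∏ v, g v (x v)))
    (h : ({i // i ∈ S} → Fin d → ℝ) → ℝ)
    (hh_nonneg : ∀ z, 0 ≤ h z)
    (hdens_reciprocal : P.rnDeriv Q =ᵐ[Q] fun x => ENNReal.ofReal (h (fun i => x i.1))) :
    ∀ P' : Measure (V → Fin d → ℝ), IsProbabilityMeasure P' → P' ≪ Q → KL P' Q ≠ ⊤ →
      (∀ i ∈ S, P'.map (fun x => x i) = μ i) →
        KL P Q ≤ KL P' Q ∧ (KL P' Q = KL P Q → P' = P) := by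
  intro P' _ hP'Q hfin' hP'marg
  obtain ⟨c, hc, hdens⟩ := exists_rnDeriv_ae_eq_const_mul_prod hQ_ac hQ_ac' hac hg_nonneg
    hh_nonneg hdens_markov hdens_reciprocal
  have hg_pos : ∀ i ∈ S, ∀ᵐ y ∂μ i, 0 < g i y := fun i hi => hmarg i hi ▸
    ae_map_eval_pos_of_ae_prod_pos hg_nonneg (ae_pos_of_rnDeriv_ae_eq_ofReal hac hdens_markov) i
      (hg_meas i)
  obtain ⟨hP_int, hP_eq⟩ :=
    integrable_llr_and_integral_llr_eq_of_map_eq hac hdens hc hg_pos hg_log_int hmarg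
  obtain ⟨hP'_int, hP'_eq⟩ :=
    integrable_llr_and_integral_llr_eq_of_map_eq hP'Q hdens hc hg_pos hg_log_int hP'marg
  refine KL_le_and_eq_of_integral_llr_eq ?_ hac hfin' hP_int hP'_int (hP'_eq.trans hP_eq.symm)
  refine absolutelyContinuous_of_ae_rnDeriv_pos hac hP'Q ?_
  filter_upwards [hP'Q.ae_le hdens, ae_forall_pos_of_map_eq hg_pos hP'marg] with x hx hgx
  exact hx ▸ ENNReal.ofReal_pos.mpr (mul_pos hc (Finset.prod_pos hgx))

/-- **Static TreeSB characterisation.** A coupling `P` with correct marginals `μ i` on `S` and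
finite KL divergence whose density with respect to `Q` factorises simultaneously as a product
of single-vertex potentials `∏_{v ∈ V} g v (x v)` (Markov factorisation) and as a function
`h ((x i)_{i ∈ S})` of the coordinates in `S` only (reciprocal factorisation) is the unique
minimiser of `KL(· ‖ Q)` over couplings with marginals `μ i` on `S`, absolutely continuous
with respect to `Q` and with finite KL divergence. -/
theorem static_treeSB_characterisation
    {V : Type*} [Fintype V] (d : ℕ) (S : Finset V) (hS : S.Nonempty)
    (Q : Measure (V → Fin d → ℝ)) [SigmaFinite Q]
    (hQ_ac : Q ≪ volume) (hQ_ac' : (volume : Measure (V → Fin d → ℝ)) ≪ Q)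
    (μ : V → Measure (Fin d → ℝ)) (hμ : ∀ i ∈ S, IsProbabilityMeasure (μ i))
    (P : Measure (V → Fin d → ℝ)) [IsProbabilityMeasure P]
    (hac : P ≪ Q)
    (hfin : KL P Q ≠ ⊤)
    (hmarg : ∀ i ∈ S, P.map (fun x => x i) = μ i)
    (g : V → (Fin d → ℝ) → ℝ)
    (hg_meas : ∀ v, Measurable (g v))
    (hg_nonneg : ∀ v y, 0 ≤ g v y)
    (hg_log_int : ∀ i ∈ S, Integrable (fun y => Real.log (g i y)) (μ i))
    (hdens_markov : P.rnDeriv Q =ᵐ[Q] fun x => ENNReal.ofReal (∏ v, g v (x v)))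
    (h : ({i // i ∈ S} → Fin d → ℝ) → ℝ)
    (hh_meas : Measurable h)
    (hh_nonneg : ∀ z, 0 ≤ h z)
    (hdens_reciprocal : P.rnDeriv Q =ᵐ[Q] fun x => ENNReal.ofReal (h (fun i => x i.1))) :
    ∀ P' : Measure (V → Fin d → ℝ), IsProbabilityMeasure P' → P' ≪ Q → KL P' Q ≠ ⊤ →
      (∀ i ∈ S, P'.map (fun x => x i) = μ i) →
        KL P Q ≤ KL P' Q ∧ (KL P' Q = KL P Q → P' = P) :=
  static_treeSB_characterisation_general d S Q hQ_ac hQ_ac' μ P hac hmarg g hg_meas hg_nonneg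
    hg_log_int hdens_markov h hh_nonneg hdens_reciprocal
end

section
/- Let d ≥ 1, let S be a finite nonempty set, let Q be a σ-finite measure on (ℝ^d)^S, and let B : ℝ^d → [0,∞) be measurable with z_B := ∫ exp(−∑_{i∈S} B(x_i)) dQ(x) ∈ (0,∞). Define the probability measure Q^B on (ℝ^d)^S by dQ^B/dQ(x) = z_B^{-1} exp(−∑_{i∈S} B(x_i)). Then for every probability measure Π on (ℝ^d)^S with Π ≪ Q whose marginal at each i ∈ S equals a probability measure μ_i satisfying ∫ B dμ_i < ∞, the integral ∫ log(dΠ/dQ) dΠ is well-defined in (−∞,+∞] and KL(Π ‖ Q) = KL(Π ‖ Q^B) − ∑_{i∈S} ∫ B dμ_i − log z_B. -/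
open MeasureTheory ProbabilityTheory Classical

open scoped ENNReal

/-! `Q^B` is the tilt of `Q` by `f = -∑ i, B (x i)`, and tilting shifts the log-likelihood ratio:
`llr P Q = llr P Q^B + f - log z_B` `P`-a.e. The marginal conditions make `f` integrable under `P`
with `∫ f dP = -∑ i, ∫ B dμ i`, so integrating the shift gives the formula, both sides being
infinite together. The negative part of `llr P Q^B` is integrable because `Q^B` is finite and
`t |min (log t) 0| ≤ 1` (from `t log t ≥ t - 1`); the shift transfers this to `llr P Q`. -/

lemma Real.mul_abs_min_log_zero_le_one {t : ℝ} (ht : 0 ≤ t) : t * |min (Real.log t) 0| ≤ 1 := by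
  rw [abs_of_nonpos (min_le_right _ _), ← max_neg_neg, neg_zero, mul_max_of_nonneg _ _ ht, mul_zero]
  exact max_le (by linarith [Real.self_sub_one_le_mul_log ht]) zero_le_one

lemma abs_min_add_zero_le (a c : ℝ) : |min (a + c) 0| ≤ |min a 0| + |c| := by
  have h : |min (a + c) 0 - min a 0| ≤ |c| :=
    (abs_min_sub_min_le_max (a + c) 0 a 0).trans (by simp)
  linarith [abs_sub_abs_le_abs_sub (min (a + c) 0) (min a 0)]

section

variable {α : Type*} [MeasurableSpace α] {μ ν : Measure α} {f : α → ℝ}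

lemma MeasureTheory.Integrable.min_zero_add {g : α → ℝ}
    (hf : Integrable (fun x ↦ min (f x) 0) μ) (hf_meas : AEStronglyMeasurable f μ)
    (hg : Integrable g μ) : Integrable (fun x ↦ min (f x + g x) 0) μ :=
  (hf.abs.add hg.abs).mono' ((hf_meas.add hg.1).inf aestronglyMeasurable_const)
    (ae_of_all _ fun x ↦ abs_min_add_zero_le (f x) (g x))

lemma integrable_min_llr_zero [SigmaFinite μ] [IsFiniteMeasure ν] (hμν : μ ≪ ν) :
    Integrable (fun x ↦ min (llr μ ν x) 0) μ := by
  have h_meas : Measurable fun x ↦ min (llr μ ν x) 0 := (measurable_llr _ _).min measurable_const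
  refine ⟨h_meas.aestronglyMeasurable, ?_⟩
  rw [hasFiniteIntegral_iff_norm, ← lintegral_rnDeriv_mul hμν
    h_meas.norm.ennreal_ofReal.aemeasurable]
  calc ∫⁻ x, μ.rnDeriv ν x * ENNReal.ofReal ‖min (llr μ ν x) 0‖ ∂ν ≤ ∫⁻ _, 1 ∂ν := by
        refine lintegral_mono_ae ?_
        filter_upwards [Measure.rnDeriv_lt_top μ ν] with x hx
        rw [← ENNReal.ofReal_toReal hx.ne, ← ENNReal.ofReal_mul ENNReal.toReal_nonneg,
          Real.norm_eq_abs, llr, ← ENNReal.ofReal_one]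
        exact ENNReal.ofReal_le_ofReal (Real.mul_abs_min_log_zero_le_one ENNReal.toReal_nonneg)
    _ < ∞ := by simp

lemma llr_eq_llr_tilted_right_add [SigmaFinite μ] [SigmaFinite ν] (hμν : μ ≪ ν)
    (hfν : Integrable (fun x ↦ Real.exp (f x)) ν) :
    llr μ ν =ᵐ[μ] fun x ↦ llr μ (ν.tilted f) x + (f x - Real.log (∫ z, Real.exp (f z) ∂ν)) := by
  filter_upwards [llr_tilted_right hμν hfν] with x hx
  rw [hx]
  ring

lemma integrable_llr_tilted_right_iff [IsFiniteMeasure μ] [SigmaFinite ν] (hμν : μ ≪ ν)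
    (hfμ : Integrable f μ) (hfν : Integrable (fun x ↦ Real.exp (f x)) ν) :
    Integrable (llr μ (ν.tilted f)) μ ↔ Integrable (llr μ ν) μ := by
  refine ⟨fun h ↦ ?_, fun h ↦ integrable_llr_tilted_right hμν hfμ h hfν⟩
  rw [integrable_congr (llr_eq_llr_tilted_right_add hμν hfν)]
  exact h.add (hfμ.sub (integrable_const _))

lemma integrable_min_llr_zero_of_integrable_exp [IsFiniteMeasure μ] [SigmaFinite ν]
    (hμν : μ ≪ ν) (hfμ : Integrable f μ) (hfν : Integrable (fun x ↦ Real.exp (f x)) ν) :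
    Integrable (fun x ↦ min (llr μ ν x) 0) μ := by
  have hμν' : μ ≪ ν.tilted f := hμν.trans (absolutelyContinuous_tilted hfν)
  refine ((integrable_min_llr_zero hμν').min_zero_add (measurable_llr _ _).aestronglyMeasurable
    (hfμ.sub (integrable_const (Real.log (∫ z, Real.exp (f z) ∂ν))))).congr ?_
  filter_upwards [llr_eq_llr_tilted_right_add hμν hfν] with x hx
  rw [hx]
  rfl

lemma kl_eq_kl_tilted_right [IsProbabilityMeasure μ] [SigmaFinite ν] (hμν : μ ≪ ν)
    (hfμ : Integrable f μ) (hfν : Integrable (fun x ↦ Real.exp (f x)) ν) :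
    KL μ ν =
      KL μ (ν.tilted f) + ((∫ x, f x ∂μ - Real.log (∫ x, Real.exp (f x) ∂ν) : ℝ) : EReal) := by
  have hμν' : μ ≪ ν.tilted f := hμν.trans (absolutelyContinuous_tilted hfν)
  by_cases h_int : Integrable (llr μ ν) μ
  · rw [KL, KL, if_pos ⟨hμν, h_int⟩,
      if_pos ⟨hμν', (integrable_llr_tilted_right_iff hμν hfμ hfν).2 h_int⟩,
      integral_llr_tilted_right hμν hfμ hfν h_int, ← EReal.coe_add]
    ring_nf
  · rw [KL, KL, if_neg fun h ↦ h_int h.2,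
      if_neg fun h ↦ h_int ((integrable_llr_tilted_right_iff hμν hfμ hfν).1 h.2), EReal.top_add_coe]

end

theorem kl_change_of_reference_general
    {S : Type*} [Fintype S] (d : ℕ)
    (Q : Measure (S → Fin d → ℝ)) [SigmaFinite Q]
    (B : (Fin d → ℝ) → ℝ) (hB_meas : Measurable B)
    (zB : ℝ) (hzB_pos : 0 < zB)
    (hzB : ∫⁻ x, ENNReal.ofReal (Real.exp (-∑ i, B (x i))) ∂Q = ENNReal.ofReal zB)
    (QB : Measure (S → Fin d → ℝ))
    (hQB : QB = Q.withDensity (fun x => ENNReal.ofReal (zB⁻¹ * Real.exp (-∑ i, B (x i)))))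
    (μ : S → Measure (Fin d → ℝ))
    (hB_int : ∀ i, Integrable B (μ i))
    (P : Measure (S → Fin d → ℝ)) [IsProbabilityMeasure P]
    (hac : P ≪ Q)
    (hmarg : ∀ i, P.map (fun x => x i) = μ i) :
    Integrable (fun x => min (llr P Q x) 0) P ∧
      KL P Q = KL P QB - ((∑ i, ∫ y, B y ∂(μ i) : ℝ) : EReal) - ((Real.log zB : ℝ) : EReal) := by
  set f : (S → Fin d → ℝ) → ℝ := fun x ↦ -∑ i, B (x i)
  have hf_meas : Measurable f :=
    (Finset.measurable_sum _ fun i _ ↦ hB_meas.comp (measurable_pi_apply i)).neg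
  have hexp_nonneg : 0 ≤ᵐ[Q] fun x ↦ Real.exp (f x) := ae_of_all _ fun x ↦ (Real.exp_pos _).le
  have hfQ : Integrable (fun x ↦ Real.exp (f x)) Q :=
    ⟨hf_meas.exp.aestronglyMeasurable, by
      rw [hasFiniteIntegral_iff_ofReal hexp_nonneg, hzB]; exact ENNReal.ofReal_lt_top⟩
  have hzB_eq : ∫ x, Real.exp (f x) ∂Q = zB := by
    rw [integral_eq_lintegral_of_nonneg_ae hexp_nonneg hfQ.1, hzB, ENNReal.toReal_ofReal hzB_pos.le]
  have hQB_tilted : QB = Q.tilted f := by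
    simp_rw [hQB, Measure.tilted, hzB_eq, div_eq_inv_mul]
    rfl
  have hB_comp_int (i : S) : Integrable (fun x ↦ B (x i)) P :=
    (hmarg i ▸ hB_int i).comp_measurable (measurable_pi_apply i)
  have hfP : Integrable f P := (integrable_finsetSum _ fun i _ ↦ hB_comp_int i).neg
  have hfP_eq : ∫ x, f x ∂P = -∑ i, ∫ y, B y ∂(μ i) := by
    rw [integral_neg, integral_finsetSum _ fun i _ ↦ hB_comp_int i]
    congr 1
    refine Finset.sum_congr rfl fun i _ ↦ ?_
    rw [← hmarg i, integral_map (measurable_pi_apply i).aemeasurable (hmarg i ▸ hB_int i).1]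
  refine ⟨integrable_min_llr_zero_of_integrable_exp hac hfP hfQ, ?_⟩
  rw [kl_eq_kl_tilted_right hac hfP hfQ, ← hQB_tilted, hfP_eq, hzB_eq, EReal.coe_sub,
    EReal.coe_neg]
  simp only [sub_eq_add_neg, add_assoc]

/-- Change of reference measure for KL: with `Q^B` the probability measure with density
`z_B⁻¹ exp(−∑_{i∈S} B (x i))` with respect to `Q`, every coupling `P ≪ Q` with marginals
`μ i` satisfying `∫ B dμ_i < ∞` has a well-defined KL divergence (negative part of the
log-likelihood ratio integrable) and
`KL(P ‖ Q) = KL(P ‖ Q^B) − ∑_{i∈S} ∫ B dμ_i − log z_B`. -/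
theorem kl_change_of_reference
    {S : Type*} [Fintype S] [Nonempty S] (d : ℕ) (hd : 1 ≤ d)
    (Q : Measure (S → Fin d → ℝ)) [SigmaFinite Q]
    (B : (Fin d → ℝ) → ℝ) (hB_meas : Measurable B) (hB_nonneg : ∀ y, 0 ≤ B y)
    (zB : ℝ) (hzB_pos : 0 < zB)
    (hzB : ∫⁻ x, ENNReal.ofReal (Real.exp (-∑ i, B (x i))) ∂Q = ENNReal.ofReal zB)
    (QB : Measure (S → Fin d → ℝ))
    (hQB : QB = Q.withDensity (fun x => ENNReal.ofReal (zB⁻¹ * Real.exp (-∑ i, B (x i)))))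
    (μ : S → Measure (Fin d → ℝ)) [∀ i, IsProbabilityMeasure (μ i)]
    (hB_int : ∀ i, Integrable B (μ i))
    (P : Measure (S → Fin d → ℝ)) [IsProbabilityMeasure P]
    (hac : P ≪ Q)
    (hmarg : ∀ i, P.map (fun x => x i) = μ i) :
    Integrable (fun x => min (llr P Q x) 0) P ∧
      KL P Q = KL P QB - ((∑ i, ∫ y, B y ∂(μ i) : ℝ) : EReal) - ((Real.log zB : ℝ) : EReal) :=
  kl_change_of_reference_general d Q B hB_meas zB hzB_pos hzB QB hQB μ hB_int P hac hmarg
end
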